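/- Let f ∈ E nonzero and φ ∈ X. Define f^{*φ}(x,v) = f*(a_φ(|v|²/2+φ(x))) when |v|²/2+φ(x) < 0 and 0 otherwise, where f* is the Schwarz symmetric decreasing rearrangement of f on ℝ₊. Then f^{*φ} is equimeasurable with f: for every s > 0, meas{f^{*φ} > s} = meas{f > s}. -/

import Mathlib

open MeasureTheory Real Filter Set ENNReal

noncomputable section

abbrev R3 := EuclideanSpace ℝ (Fin 3)

def mX (φ : R3 → ℝ) : ℝ := ⨅ x : R3, (1 + ‖x‖) * |φ x|

def memX (φ : R3 → ℝ) : Prop :=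
  Continuous φ ∧ (∀ x, φ x ≤ 0) ∧ Tendsto φ (cocompact R3) (nhds 0) ∧
    Integrable (fun x => ‖fderiv ℝ φ x‖ ^ 2) ∧ 0 < mX φ

def memE (f : R3 × R3 → ℝ) : Prop :=
  (∀ p, 0 ≤ f p) ∧ Integrable f ∧ MemLp f ⊤ volume ∧
    Integrable (fun p : R3 × R3 => ‖p.2‖ ^ 2 * f p)

def aphi (φ : R3 → ℝ) (e : ℝ) : ℝ :=
  (8 * π * Real.sqrt 2 / 3) * ∫ x : R3, (max (e - φ x) 0) ^ ((3 : ℝ) / 2)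

/-- Distribution function `μ_f(s) = meas{f > s}`. -/
def distFun (f : R3 × R3 → ℝ) (s : ℝ) : ℝ≥0∞ := volume {p : R3 × R3 | f p > s}

/-- Schwarz symmetric decreasing rearrangement on `ℝ₊`. -/
def schwarz (f : R3 × R3 → ℝ) (t : ℝ) : ℝ :=
  sInf {s : ℝ | 0 ≤ s ∧ distFun f s ≤ ENNReal.ofReal t}

/-- The generalized rearrangement `f^{*φ}` with respect to the microscopic energy. -/
def genRearr (f : R3 × R3 → ℝ) (φ : R3 → ℝ) (p : R3 × R3) : ℝ :=
  if ‖p.2‖ ^ 2 / 2 + φ p.1 < 0 then schwarz f (aphi φ (‖p.2‖ ^ 2 / 2 + φ p.1)) else 0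

open Topology

/-!
Let `ν` be the law of the energy `e(x, v) = |v|²/2 + φ(x)` under Lebesgue measure on `ℝ³ × ℝ³`.
Slicing in `v` (Fubini) and the volume of balls in `ℝ³` give `ν(-∞, e) = a_φ(e)` for `e < 0`,
and `ν` has no atoms since the slices of a level set are spheres. The bound
`|φ(x)| ≥ m_X / (1 + |x|)` puts products of balls of volume `≍ t³` below the zero level, so
`ν(-∞, 0) = ∞`. As `f*` is the right-continuous inverse of `μ_f`, `f^{*φ}(p) > s` iff
`ν(-∞, e(p)) < μ_f(s)`, so `meas{f^{*φ} > s} = ν{e : ν(-∞, e) < μ_f(s)}`. For an atomless `ν` this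
down-set is `(-∞, e₀)` up to a point, with `ν(-∞, e₀) = μ_f(s)` by continuity of `e ↦ ν(-∞, e)`
from both sides (`μ_f(s) < ∞` because `f ∈ L¹`).
-/

section MonotoneLimits

variable {α β : Type*} [MeasurableSpace α] {μ : Measure α}
  [LinearOrder β] [TopologicalSpace β] [OrderTopology β] [DenselyOrdered β]
  [FirstCountableTopology β]

theorem measure_lt_le_of_forall_gt [NoMaxOrder β] {g : α → β} {a : β} {m : ℝ≥0∞}
    (h : ∀ b > a, μ {x | b < g x} ≤ m) : μ {x | a < g x} ≤ m := by
  obtain ⟨u, hu_anti, hu_gt, hu_lim⟩ := exists_seq_strictAnti_tendsto a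
  have hunion : {x | a < g x} = ⋃ n, {x | u n < g x} := by
    simp_rw [← mem_Ioi, ← preimage_ofPred_eq, ofPred_mem_eq, ← preimage_iUnion,
      (isGLB_of_tendsto_atTop hu_anti.antitone hu_lim).iUnion_Ioi_eq]
  have hmono : Monotone fun n ↦ {x | u n < g x} :=
    fun n k hnk x hx ↦ (hu_anti.antitone hnk).trans_lt hx
  rw [hunion, hmono.measure_iUnion]
  exact iSup_le fun n ↦ h _ (hu_gt n)

theorem measure_gt_le_of_forall_lt [NoMinOrder β] {g : α → β} {a : β} {m : ℝ≥0∞}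
    (h : ∀ b < a, μ {x | g x < b} ≤ m) : μ {x | g x < a} ≤ m :=
  measure_lt_le_of_forall_gt (β := βᵒᵈ) h

end MonotoneLimits

theorem le_measure_Iic_of_forall_lt {ν : Measure ℝ} {a b : ℝ} {m : ℝ≥0∞} (hab : a < b)
    (hb : ν (Iio b) ≠ ∞) (h : ∀ e ∈ Ioo a b, m ≤ ν (Iio e)) : m ≤ ν (Iic a) := by
  obtain ⟨u, hu_anti, hu_mem, hu_lim⟩ := exists_seq_strictAnti_tendsto' hab
  have hinter : Iic a = ⋂ n, Iio (u n) := by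
    ext x
    simp only [mem_Iic, mem_iInter, mem_Iio]
    exact ⟨fun hx n ↦ hx.trans_lt (hu_mem n).1,
      fun hx ↦ ge_of_tendsto' hu_lim fun n ↦ (hx n).le⟩
  have hanti : Antitone fun n ↦ Iio (u n) := fun n k hnk ↦ Iio_subset_Iio (hu_anti.antitone hnk)
  rw [hinter, hanti.measure_iInter (fun _ ↦ measurableSet_Iio.nullMeasurableSet)
    ⟨0, ne_top_of_le_ne_top hb (measure_mono (Iio_subset_Iio (hu_mem 0).2.le))⟩]
  exact le_iInf fun n ↦ h _ (hu_mem n)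

theorem exists_measure_Iio_lt {ν : Measure ℝ} {c : ℝ} (hc : ν (Iio c) ≠ ∞) {m : ℝ≥0∞}
    (hm : 0 < m) : ∃ e, ν (Iio e) < m := by
  have hlim := tendsto_measure_iInter_atBot (μ := ν) (fun e ↦ measurableSet_Iio.nullMeasurableSet)
    (fun _ _ ↦ Iio_subset_Iio) ⟨c, hc⟩
  have hempty : ⋂ e : ℝ, Iio e = ∅ := iInter_eq_empty_iff.2 fun x ↦ ⟨x, lt_irrefl x⟩
  rw [hempty, measure_empty] at hlim
  exact (hlim.eventually (gt_mem_nhds hm)).exists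

theorem measure_setOf_measure_Iio_lt {ν : Measure ℝ} [NullSingletonClass ν] {c : ℝ} {m : ℝ≥0∞}
    (hfin : ∀ e < c, ν (Iio e) ≠ ∞) (hm : m < ν (Iio c)) :
    ν {e | ν (Iio e) < m} = m := by
  set A := {e | ν (Iio e) < m}
  rcases eq_zero_or_pos m with rfl | hm0
  · simp [A]
  have hlower : ∀ {e e'}, e ≤ e' → e' ∈ A → e ∈ A :=
    fun h h' ↦ (measure_mono (Iio_subset_Iio h)).trans_lt h'
  have hbdd : BddAbove A := ⟨c, fun e he ↦ le_of_not_gt fun hce ↦ (hlower hce.le he).not_gt hm⟩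
  have hne : A.Nonempty := exists_measure_Iio_lt (hfin (c - 1) (by linarith)) hm0
  set e₀ := sSup A
  have hIio : Iio e₀ ⊆ A := fun e he ↦
    let ⟨_, he', hlt⟩ := exists_lt_of_lt_csSup hne he; hlower hlt.le he'
  have hIic : A ⊆ Iic e₀ := fun e he ↦ le_csSup hbdd he
  have hle : ν (Iio e₀) ≤ m := measure_gt_le_of_forall_lt fun e he ↦ (hIio he).le
  have he₀c : e₀ < c := lt_of_not_ge fun h ↦
    (hm.trans_le ((measure_mono (Iio_subset_Iio h)).trans hle)).false
  have hge : m ≤ ν (Iic e₀) :=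
    le_measure_Iic_of_forall_lt (b := (e₀ + c) / 2) (by linarith) (hfin _ (by linarith))
      fun e he ↦ not_lt.1 fun h ↦ he.1.not_ge (le_csSup hbdd h)
  rw [← measure_congr Iio_ae_eq_Iic] at hge
  exact le_antisymm ((measure_mono hIic).trans ((measure_congr Iio_ae_eq_Iic).symm.le.trans hle))
    (hge.trans (measure_mono hIio))

theorem volume_setOf_norm_sq_half_lt (a : ℝ) :
    volume {v : R3 | ‖v‖ ^ 2 / 2 < a}
      = ENNReal.ofReal (8 * π * √2 / 3 * max a 0 ^ ((3 : ℝ) / 2)) := by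
  have hball : {v : R3 | ‖v‖ ^ 2 / 2 < a} = Metric.ball 0 √(2 * a) := by
    ext v
    rw [mem_ofPred_eq, mem_ball_zero_iff, Real.lt_sqrt (norm_nonneg v)]
    constructor <;> intro <;> linarith
  rw [hball, EuclideanSpace.volume_ball_fin_three, ← ENNReal.ofReal_pow (Real.sqrt_nonneg _),
    ← ENNReal.ofReal_mul (by positivity)]
  congr 1
  rcases le_total a 0 with ha | ha
  · simp [Real.sqrt_eq_zero'.2 (by linarith : 2 * a ≤ 0), max_eq_right ha]
  · have hpow : a ^ ((3 : ℝ) / 2) = √a ^ 3 := by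
      rw [Real.sqrt_eq_rpow, ← Real.rpow_natCast, ← Real.rpow_mul ha]; norm_num
    rw [max_eq_left ha, hpow, Real.sqrt_mul (by norm_num)]
    have h2 : √2 ^ 2 = 2 := Real.sq_sqrt (by norm_num)
    linear_combination (4 / 3 * π * √2 * √a ^ 3) * h2

theorem volume_setOf_norm_sq_half_eq (a : ℝ) : volume {v : R3 | ‖v‖ ^ 2 / 2 = a} = 0 :=
  measure_mono_null (fun v (hv : ‖v‖ ^ 2 / 2 = a) ↦ by
      rw [mem_sphere_zero_iff_norm, ← hv, show ‖v‖ ^ 2 / 2 * 2 = ‖v‖ ^ 2 by ring,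
        Real.sqrt_sq (norm_nonneg v)])
    (Measure.addHaar_sphere volume (0 : R3) √(a * 2))

theorem mX_le (φ : R3 → ℝ) (x : R3) : mX φ ≤ (1 + ‖x‖) * |φ x| :=
  ciInf_le ⟨0, by rintro _ ⟨y, rfl⟩; positivity⟩ x

def energy (φ : R3 → ℝ) (p : R3 × R3) : ℝ := ‖p.2‖ ^ 2 / 2 + φ p.1

def energyLaw (φ : R3 → ℝ) : Measure ℝ := volume.map (energy φ)

section Energy

variable {φ : R3 → ℝ}

theorem measurable_energy (hφ : Measurable φ) : Measurable (energy φ) := by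
  unfold energy; fun_prop

theorem energyLaw_apply (hφ : Measurable φ) {S : Set ℝ} (hS : MeasurableSet S) :
    energyLaw φ S = ∫⁻ x, volume {v : R3 | ‖v‖ ^ 2 / 2 + φ x ∈ S} := by
  rw [energyLaw, Measure.map_apply (measurable_energy hφ) hS, Measure.volume_eq_prod,
    Measure.prod_apply (measurable_energy hφ hS)]
  rfl

theorem nullSingletonClass_energyLaw (hφ : Measurable φ) : NullSingletonClass (energyLaw φ) where
  measure_singleton e := by
    rw [energyLaw_apply hφ (measurableSet_singleton e)]
    simp_rw [mem_singleton_iff, ← eq_sub_iff_add_eq, volume_setOf_norm_sq_half_eq, lintegral_zero]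

theorem integrable_max_sub_rpow (hφc : Continuous φ) (hφ0 : Tendsto φ (cocompact R3) (𝓝 0))
    {e : ℝ} (he : e < 0) : Integrable fun x ↦ max (e - φ x) 0 ^ ((3 : ℝ) / 2) := by
  refine Continuous.integrable_of_hasCompactSupport (by fun_prop (disch := norm_num)) ?_
  obtain ⟨K, hK, hKc⟩ := mem_cocompact'.1 (hφ0 (Ioi_mem_nhds he))
  refine HasCompactSupport.intro hK fun x hx ↦ ?_
  have hφx : e < φ x := not_not.1 fun h ↦ hx (hKc h)
  rw [max_eq_right (by linarith), Real.zero_rpow (by norm_num)]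

theorem energyLaw_Iio_of_neg (hφc : Continuous φ) (hφ0 : Tendsto φ (cocompact R3) (𝓝 0))
    {e : ℝ} (he : e < 0) : energyLaw φ (Iio e) = ENNReal.ofReal (aphi φ e) := by
  rw [energyLaw_apply hφc.measurable measurableSet_Iio]
  simp_rw [mem_Iio, ← lt_sub_iff_add_lt, volume_setOf_norm_sq_half_lt]
  rw [← ofReal_integral_eq_lintegral_ofReal
      ((integrable_max_sub_rpow hφc hφ0 he).const_mul _)
      (Eventually.of_forall fun x ↦ by positivity),
    integral_const_mul, aphi]

theorem ball_prod_ball_subset_energy_neg (hneg : ∀ x, φ x ≤ 0) {t : ℝ} (ht : 1 ≤ t) :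
    Metric.ball 0 (t ^ 2) ×ˢ Metric.ball 0 (√(mX φ) / t) ⊆ energy φ ⁻¹' Iio 0 := by
  rintro ⟨x, v⟩ ⟨hx, hv⟩
  rw [mem_ball_zero_iff] at hx hv
  have hφx : mX φ ≤ (1 + ‖x‖) * -φ x := abs_of_nonpos (hneg x) ▸ mX_le φ x
  have hvt : (‖v‖ * t) ^ 2 < mX φ :=
    (Real.lt_sqrt (by positivity)).1 ((lt_div_iff₀ (by linarith)).1 hv)
  show ‖v‖ ^ 2 / 2 + φ x < 0
  nlinarith [hneg x, norm_nonneg x, mul_le_mul_of_nonneg_right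
    (show 1 + ‖x‖ ≤ 2 * t ^ 2 by nlinarith) (neg_nonneg.2 (hneg x))]

theorem energyLaw_Iio_zero (hφc : Continuous φ) (hneg : ∀ x, φ x ≤ 0) (hm : 0 < mX φ) :
    energyLaw φ (Iio 0) = ⊤ := by
  set C := ENNReal.ofReal (π * 4 / 3)
  have hC : C ≠ 0 := by positivity
  have hbound : ∀ t ≥ 1, ENNReal.ofReal (t * √(mX φ)) ^ 3 * C ^ 2 ≤ energyLaw φ (Iio 0) := by
    intro t ht
    rw [energyLaw, Measure.map_apply (measurable_energy hφc.measurable) measurableSet_Iio]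
    refine le_trans (le_of_eq ?_) (measure_mono (ball_prod_ball_subset_energy_neg hneg ht))
    rw [Measure.volume_eq_prod, Measure.prod_prod, EuclideanSpace.volume_ball_fin_three,
      EuclideanSpace.volume_ball_fin_three, show t * √(mX φ) = t ^ 2 * (√(mX φ) / t) by
        field_simp, ENNReal.ofReal_mul (by positivity)]
    ring
  have hlim : Tendsto (fun t ↦ ENNReal.ofReal (t * √(mX φ)) ^ 3 * C ^ 2) atTop (𝓝 ⊤) := by
    have h := ENNReal.Tendsto.mul_const (b := C ^ 2) (ENNReal.Tendsto.pow (n := 3)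
      (ENNReal.tendsto_ofReal_atTop.comp (tendsto_id.atTop_mul_const (Real.sqrt_pos.2 hm))))
      (Or.inl (by simp))
    rwa [ENNReal.top_pow three_ne_zero, ENNReal.top_mul (pow_ne_zero 2 hC)] at h
  exact top_le_iff.1 (le_of_tendsto hlim ((eventually_ge_atTop (1 : ℝ)).mono hbound))

end Energy

section Rearrangement

variable {f : R3 × R3 → ℝ}

theorem distFun_antitone : Antitone (distFun f) :=
  fun _ _ h ↦ measure_mono fun _ hp ↦ h.trans_lt hp

theorem exists_distFun_eq_zero (hf : MemLp f ⊤ volume) : ∃ M, 0 ≤ M ∧ distFun f M = 0 := by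
  obtain ⟨C, hC⟩ := eLpNormEssSup_lt_top_iff_isBoundedUnder.1
    (eLpNorm_exponent_top (f := f) ▸ hf.eLpNorm_lt_top)
  refine ⟨C, C.2, measure_mono_null (fun p (hp : (C : ℝ) < f p) ↦ ?_) (ae_iff.1 hC)⟩
  simpa [← NNReal.coe_lt_coe] using hp.trans_le (le_abs_self _)

theorem lt_schwarz_iff (hf : MemLp f ⊤ volume) {s t : ℝ} (hs : 0 ≤ s) :
    s < schwarz f t ↔ ENNReal.ofReal t < distFun f s := by
  obtain ⟨M, hM0, hM⟩ := exists_distFun_eq_zero hf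
  have hne : {s' | 0 ≤ s' ∧ distFun f s' ≤ ENNReal.ofReal t}.Nonempty := ⟨M, hM0, by simp [hM]⟩
  rw [← not_le, ← not_le, not_iff_not]
  refine ⟨fun h ↦ measure_lt_le_of_forall_gt fun b hb ↦ ?_,
    fun h ↦ csInf_le ⟨0, fun _ h ↦ h.1⟩ ⟨hs, h⟩⟩
  obtain ⟨x, hx, hxb⟩ := exists_lt_of_csInf_lt hne (h.trans_lt hb)
  exact (distFun_antitone hxb.le).trans hx.2

theorem lt_genRearr_iff {φ : R3 → ℝ} (hf : MemLp f ⊤ volume) (hφc : Continuous φ)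
    (hneg : ∀ x, φ x ≤ 0) (hφ0 : Tendsto φ (cocompact R3) (𝓝 0)) (hm : 0 < mX φ)
    {s : ℝ} (hs : 0 ≤ s) (p : R3 × R3) :
    s < genRearr f φ p ↔ energyLaw φ (Iio (energy φ p)) < distFun f s := by
  rw [genRearr, ← energy.eq_1]
  split_ifs with h
  · rw [energyLaw_Iio_of_neg hφc hφ0 h, lt_schwarz_iff hf hs]
  · have htop : energyLaw φ (Iio (energy φ p)) = ⊤ := top_le_iff.1 <|
      energyLaw_Iio_zero hφc hneg hm ▸ measure_mono (Iio_subset_Iio (not_lt.1 h))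
    simp [htop, hs]

end Rearrangement

theorem genRearr_equimeasurable_general (f : R3 × R3 → ℝ) (hf : memE f)
    (φ : R3 → ℝ) (hφ : memX φ) :
    ∀ s : ℝ, 0 < s →
      volume {p : R3 × R3 | genRearr f φ p > s} = volume {p : R3 × R3 | f p > s} := by
  intro s hs
  obtain ⟨-, hf_int, hf_top, -⟩ := hf
  obtain ⟨hφc, hneg, hφ0, -, hm⟩ := hφ
  have := nullSingletonClass_energyLaw hφc.measurable
  have hset : {p | genRearr f φ p > s}
      = energy φ ⁻¹' {e | energyLaw φ (Iio e) < distFun f s} := by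
    ext p
    exact lt_genRearr_iff hf_top hφc hneg hφ0 hm hs.le p
  have hmeas : MeasurableSet {e | energyLaw φ (Iio e) < distFun f s} :=
    measurableSet_lt (Monotone.measurable fun _ _ h ↦ measure_mono (Iio_subset_Iio h))
      measurable_const
  rw [hset, ← Measure.map_apply (measurable_energy hφc.measurable) hmeas, ← energyLaw]
  refine measure_setOf_measure_Iio_lt (c := 0)
    (fun e he ↦ energyLaw_Iio_of_neg hφc hφ0 he ▸ ENNReal.ofReal_ne_top) ?_
  rw [energyLaw_Iio_zero hφc hneg hm]
  exact hf_int.measure_gt_lt_top hs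

theorem genRearr_equimeasurable (f : R3 × R3 → ℝ) (hf : memE f)
    (hne : ¬ (f =ᵐ[volume] 0)) (φ : R3 → ℝ) (hφ : memX φ) :
    ∀ s : ℝ, 0 < s →
      volume {p : R3 × R3 | genRearr f φ p > s} = volume {p : R3 × R3 | f p > s} :=
  genRearr_equimeasurable_general f hf φ hφ
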